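/- arXiv:1410.6359 — 2 statements merged into one kernel-verified Lean document; each statement's English description precedes it below -/
import Mathlib

section
/- Let A be a henselian local ring with maximal ideal 𝔪 whose residue field is infinite, and let n ≥ 0. Let B_n be the n-gonflement of A, that is, the localization of the polynomial ring A[x₀,…,xₙ] at the prime ideal 𝔪·A[x₀,…,xₙ] generated by 𝔪. Then B_n is the filtered union of its smooth and split sub-A-algebras: every finite subset of B_n is contained in a sub-A-algebra C ⊆ B_n which is smooth over A (formally smooth and of finite presentation) and split over A (there exists an A-algebra homomorphism C → A). -/
open MvPolynomial IsLocalRing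

/-- For a local ring `A` with maximal ideal `𝔪`, the prime ideal `𝔪·A[(xᵢ)_{i ∈ σ}]` of the
polynomial ring generated by `𝔪`. -/
noncomputable def gonflementIdeal (A : Type) [CommRing A] [IsLocalRing A] (σ : Type) :
    Ideal (MvPolynomial σ A) :=
  (IsLocalRing.maximalIdeal A).map (MvPolynomial.C : A →+* MvPolynomial σ A)

/-- The extended ideal `𝔪·A[(xᵢ)]` is the kernel of coefficientwise reduction modulo `𝔪`. -/
lemma gonflementIdeal_eq_ker (A : Type) [CommRing A] [IsLocalRing A] (σ : Type) :
    gonflementIdeal A σ =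
      RingHom.ker (MvPolynomial.map (IsLocalRing.residue A) :
        MvPolynomial σ A →+* MvPolynomial σ (IsLocalRing.ResidueField A)) := by
  rw [MvPolynomial.ker_map, IsLocalRing.ker_residue]
  rfl

/-- The extended ideal `𝔪·A[(xᵢ)]` is prime (the quotient is the polynomial ring over the
residue field, which is a domain). -/
instance gonflementIdeal_isPrime (A : Type) [CommRing A] [IsLocalRing A] (σ : Type) :
    (gonflementIdeal A σ).IsPrime := by
  rw [gonflementIdeal_eq_ker]
  exact RingHom.ker_isPrime _

/-- The gonflement of a local ring `A` with variables indexed by `σ`: the localization of the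
polynomial ring `A[(xᵢ)_{i ∈ σ}]` at the prime ideal `𝔪·A[(xᵢ)_{i ∈ σ}]`.  For `σ = Fin (n+1)`
this is the `n`-gonflement `Bₙ`, and for `σ = ℕ` it is the `∞`-gonflement. -/
noncomputable abbrev Gonflement (A : Type) [CommRing A] [IsLocalRing A] (σ : Type) :=
  Localization.AtPrime (gonflementIdeal A σ)

/-- McCoy-type lemma: a multivariate polynomial with a unit coefficient is a nonzerodivisor. -/
lemma mv_mem_nonZeroDivisors_of_unit_coeff :
    ∀ (n : ℕ) {A : Type} [CommRing A] (c : MvPolynomial (Fin n) A),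
      (∃ d, IsUnit (c.coeff d)) → c ∈ nonZeroDivisors (MvPolynomial (Fin n) A) := by
  intro n
  induction n with
  | zero =>
    rintro A _ c ⟨d, hd⟩
    have hd0 : d = 0 := Subsingleton.elim _ _
    subst hd0
    obtain ⟨a, rfl⟩ := MvPolynomial.C_surjective (Fin 0) c
    rw [MvPolynomial.coeff_C] at hd
    simp only [if_pos rfl] at hd
    exact (hd.map (MvPolynomial.C : A →+* MvPolynomial (Fin 0) A)).mem_nonZeroDivisors
  | succ m ih =>
    rintro A _ c ⟨d, hd⟩
    have he : (Polynomial.coeff (finSuccEquiv A m c) (d 0)) ∈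
        nonZeroDivisors (MvPolynomial (Fin m) A) := by
      apply ih
      refine ⟨d.tail, ?_⟩
      rwa [finSuccEquiv_coeff_coeff, Finsupp.cons_tail]
    have hPoly : finSuccEquiv A m c ∈
        nonZeroDivisors (Polynomial (MvPolynomial (Fin m) A)) := by
      rw [Polynomial.mem_nonZeroDivisors_iff]
      intro a ha
      have h2 : a * Polynomial.coeff (finSuccEquiv A m c) (d 0) = 0 := by
        have := congrArg (fun p => Polynomial.coeff p (d 0)) ha
        simpa [Polynomial.coeff_smul, smul_eq_mul] using this
      exact mem_nonZeroDivisors_iff_right.mp he a h2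
    rw [mem_nonZeroDivisors_iff_right]
    intro z hz
    have h3 : (finSuccEquiv A m z) * (finSuccEquiv A m c) = 0 := by
      rw [← map_mul, hz, map_zero]
    have h4 : finSuccEquiv A m z = 0 := mem_nonZeroDivisors_iff_right.mp hPoly _ h3
    exact (map_eq_zero_iff _ (finSuccEquiv A m).injective).mp h4

/-- An element outside the gonflement ideal is a nonzerodivisor. -/
lemma nonZeroDivisor_of_notMem_gonflementIdeal {A : Type} [CommRing A] [IsLocalRing A]
    {n : ℕ} {c : MvPolynomial (Fin n) A} (hc : c ∉ gonflementIdeal A (Fin n)) :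
    c ∈ nonZeroDivisors (MvPolynomial (Fin n) A) := by
  apply mv_mem_nonZeroDivisors_of_unit_coeff
  rw [gonflementIdeal_eq_ker, RingHom.mem_ker] at hc
  obtain ⟨d, hd⟩ : ∃ d, (MvPolynomial.map (residue A) c).coeff d ≠ 0 := by
    by_contra h
    push_neg at h
    exact hc (MvPolynomial.ext _ _ fun d => by simp [h d])
  refine ⟨d, ?_⟩
  rw [MvPolynomial.coeff_map] at hd
  by_contra hu
  exact hd (Ideal.Quotient.eq_zero_iff_mem.mpr
    ((IsLocalRing.mem_maximalIdeal _).mpr hu))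

/-- Let `A` be a henselian local ring with infinite residue field and `n ≥ 0`. The
`n`-gonflement `Bₙ` of `A` (the localization of `A[x₀,…,xₙ]` at the prime ideal
`𝔪·A[x₀,…,xₙ]`) is the filtered union of its smooth and split sub-`A`-algebras: every finite
subset of `Bₙ` is contained in a sub-`A`-algebra `C ⊆ Bₙ` which is smooth over `A` (formally
smooth and of finite presentation) and split over `A` (there is an `A`-algebra homomorphism
`C → A`). -/
theorem gonflement_filtered_union_of_smooth_split
    (A : Type) [CommRing A] [HenselianLocalRing A]
    [Infinite (IsLocalRing.ResidueField A)] (n : ℕ)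
    (s : Finset (Gonflement A (Fin (n + 1)))) :
    ∃ C : Subalgebra A (Gonflement A (Fin (n + 1))),
      (↑s : Set (Gonflement A (Fin (n + 1)))) ⊆ (C : Set (Gonflement A (Fin (n + 1)))) ∧
      Algebra.FormallySmooth A C ∧
      Algebra.FinitePresentation A C ∧
      Nonempty (C →ₐ[A] A) := by
  classical
  let R := MvPolynomial (Fin (n + 1)) A
  let P := gonflementIdeal A (Fin (n + 1))
  let B := Gonflement A (Fin (n + 1))
  -- choose representations of the elements of `s`
  choose num den hrep using fun b : B =>
    (let ⟨⟨r, m⟩, h⟩ := IsLocalization.mk'_surjective (S := B) P.primeCompl b; ⟨r, m, h⟩ :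
      ∃ (r : R) (m : P.primeCompl), IsLocalization.mk' B r m = b)
  -- the common denominator
  let q : R := ∏ b ∈ s, (den b : R)
  have hqP : q ∈ P.primeCompl := Submonoid.prod_mem _ fun b _ => (den b).2
  let T := Localization.Away q
  have hqT : q ∈ Submonoid.powers q := ⟨1, pow_one q⟩
  -- the canonical map T → B
  have hqu : IsUnit (algebraMap R B q) := IsLocalization.map_units B ⟨q, hqP⟩
  let g0 : T →+* B := IsLocalization.Away.lift (g := algebraMap R B) q hqu
  have hg0 : ∀ r : R, g0 (algebraMap R T r) = algebraMap R B r := fun r =>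
    IsLocalization.Away.lift_eq q hqu r
  let g : T →ₐ[A] B :=
    { toRingHom := g0
      commutes' := fun a => by
        show g0 (algebraMap A T a) = algebraMap A B a
        rw [IsScalarTower.algebraMap_apply A R T, hg0, ← IsScalarTower.algebraMap_apply] }
  -- g sends mk' to mk'
  have hgmk : ∀ (p : R) (m : Submonoid.powers q) (m' : P.primeCompl),
      (m : R) = (m' : R) → g (IsLocalization.mk' T p m) = IsLocalization.mk' B p m' := by
    intro p m m' hmm'
    rw [IsLocalization.eq_mk'_iff_mul_eq]
    show g0 _ * algebraMap R B (m' : R) = _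
    rw [← hmm', ← hg0 (m : R), ← map_mul]
    rw [IsLocalization.mk'_spec, hg0]
  -- g is injective
  have hginj : Function.Injective g := by
    have halg : Function.Injective (algebraMap R B) :=
      IsLocalization.injective (M := P.primeCompl) B
        (fun c hc => nonZeroDivisor_of_notMem_gonflementIdeal hc)
    rw [injective_iff_map_eq_zero]
    intro x hx
    obtain ⟨p, m, rfl⟩ : ∃ (p : R) (m : Submonoid.powers q), IsLocalization.mk' T p m = x :=
      let ⟨⟨p, m⟩, h⟩ := IsLocalization.mk'_surjective (S := T) (Submonoid.powers q) x; ⟨p, m, h⟩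
    obtain ⟨k, hk⟩ := m.2
    have hmP : (m : R) ∈ P.primeCompl := by
      rw [← hk]; exact pow_mem hqP k
    rw [hgmk p m ⟨(m : R), hmP⟩ rfl] at hx
    have hp0 : algebraMap R B p = 0 := by
      rw [← IsLocalization.mk'_spec B p ⟨(m : R), hmP⟩, hx, zero_mul]
    have : p = 0 := halg (by rw [hp0, map_zero])
    rw [this, IsLocalization.mk'_zero]
  -- smoothness and finite presentation of T over A
  have hfs : Algebra.FormallySmooth A T := by
    have h1 : Algebra.FormallySmooth A R := inferInstance
    have h2 : Algebra.FormallySmooth R T :=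
      Algebra.FormallySmooth.of_isLocalization (Submonoid.powers q)
    exact Algebra.FormallySmooth.comp A R T
  have hfp : Algebra.FinitePresentation A T := by
    have h1 : Algebra.FinitePresentation A R := inferInstance
    have h2 : Algebra.FinitePresentation R T := IsLocalization.Away.finitePresentation q
    exact Algebra.FinitePresentation.trans A R T
  -- the splitting: a point where q does not vanish
  have hqres : MvPolynomial.map (residue A) q ≠ 0 := by
    intro h0
    have hqk : q ∈ P := by
      show q ∈ gonflementIdeal A (Fin (n + 1))
      rw [gonflementIdeal_eq_ker, RingHom.mem_ker]
      exact h0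
    exact hqP hqk
  obtain ⟨x, hx⟩ : ∃ x : Fin (n + 1) → ResidueField A,
      eval x (MvPolynomial.map (residue A) q) ≠ 0 := by
    by_contra h
    push_neg at h
    exact hqres (MvPolynomial.funext fun x => by rw [h x, map_zero])
  choose lift hlift using fun y : ResidueField A =>
    Ideal.Quotient.mk_surjective (I := maximalIdeal A) y
  let a : Fin (n + 1) → A := fun i => lift (x i)
  have hres_eval : residue A (eval a q) = eval x (MvPolynomial.map (residue A) q) := by
    rw [MvPolynomial.eval_map]
    show residue A (MvPolynomial.eval₂ (RingHom.id A) a q) = _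
    rw [MvPolynomial.eval₂_comp_left (residue A) (RingHom.id A) a q, RingHom.comp_id,
      show ((residue A : A → ResidueField A) ∘ a) = x from funext fun i => hlift (x i)]
  have hevu : IsUnit (MvPolynomial.eval a q) := by
    by_contra hu
    have hmem : MvPolynomial.eval a q ∈ maximalIdeal A :=
      (IsLocalRing.mem_maximalIdeal _).mpr (mem_nonunits_iff.mpr hu)
    exact hx (hres_eval ▸ Ideal.Quotient.eq_zero_iff_mem.mpr hmem)
  have hevu' : IsUnit ((MvPolynomial.aeval a : R →ₐ[A] A) q) := by
    rwa [MvPolynomial.aeval_def, Algebra.algebraMap_self, MvPolynomial.eval₂_id]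
  let σ0 : T →+* A :=
    IsLocalization.Away.lift (g := (MvPolynomial.aeval a : R →ₐ[A] A).toRingHom) q hevu'
  let σA : T →ₐ[A] A :=
    { toRingHom := σ0
      commutes' := fun c => by
        show σ0 (algebraMap A T c) = algebraMap A A c
        rw [IsScalarTower.algebraMap_apply A R T]
        show σ0 (algebraMap R T (algebraMap A R c)) = _
        rw [IsLocalization.Away.lift_eq q hevu' (algebraMap A R c)]
        show MvPolynomial.aeval a (algebraMap A R c) = c
        rw [AlgHom.commutes]
        rfl }
  -- the subalgebra
  refine ⟨g.range, ?_, ?_, ?_, ?_⟩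
  · -- containment
    intro b hb
    rw [Finset.mem_coe] at hb
    have hbq : q = (den b : R) * ∏ b' ∈ s.erase b, (den b' : R) :=
      (Finset.mul_prod_erase s _ hb).symm
    have hrest : (∏ b' ∈ s.erase b, (den b' : R)) ∈ P.primeCompl :=
      Submonoid.prod_mem _ fun b' _ => (den b').2
    have hbmk : IsLocalization.mk' B (num b * ∏ b' ∈ s.erase b, (den b' : R)) ⟨q, hqP⟩ = b := by
      have h5 : (⟨q, hqP⟩ : P.primeCompl) = den b * ⟨_, hrest⟩ := Subtype.ext (by
        show q = (den b : R) * _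
        exact hbq)
      rw [h5]
      exact (IsLocalization.mk'_cancel (num b) (den b)
        ⟨∏ b' ∈ s.erase b, (den b' : R), hrest⟩).trans (hrep b)
    refine ⟨IsLocalization.mk' T (num b * ∏ b' ∈ s.erase b, (den b' : R)) ⟨q, hqT⟩, ?_⟩
    show g (IsLocalization.mk' T (num b * ∏ b' ∈ s.erase b, (den b' : R)) ⟨q, hqT⟩) = b
    rw [hgmk _ ⟨q, hqT⟩ ⟨q, hqP⟩ rfl]
    exact hbmk
  · exact Algebra.FormallySmooth.of_equiv (AlgEquiv.ofInjective g hginj)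
  · exact Algebra.FinitePresentation.equiv
      (R := A) (A := T) (B := ↥g.range) (AlgEquiv.ofInjective g hginj)
  · exact ⟨σA.comp (AlgEquiv.ofInjective g hginj).symm.toAlgHom⟩
end

section
/- Let A be a noetherian henselian local ring with maximal ideal 𝔪 whose residue field is infinite, and let B be the ∞-gonflement of A, that is, the localization of the polynomial ring A[(x_i)_{i∈ℕ}] in countably many variables at the prime ideal 𝔪·A[(x_i)_{i∈ℕ}] generated by 𝔪. Then B is the filtered union of smooth split sub-A-algebras: every finite subset of B is contained in a sub-A-algebra C ⊆ B which is smooth over A (formally smooth and of finite presentation) and split over A (there exists an A-algebra homomorphism C → A). -/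
open MvPolynomial IsLocalRing

section McCoy

variable {A : Type*} [CommRing A]

omit [CommRing A] in
lemma fin_regular_of_isUnit_coeff [CommRing A] :
    ∀ (n : ℕ) (p : MvPolynomial (Fin n) A) (m : (Fin n) →₀ ℕ), IsUnit (p.coeff m) →
      p ∈ nonZeroDivisors (MvPolynomial (Fin n) A) := by
  intro n
  induction n with
  | zero =>
    intro p m hm
    have : m = 0 := Subsingleton.elim _ _
    subst this
    have hp : p = C (p.coeff 0) := eq_C_of_isEmpty p
    rw [hp]
    exact (hm.map (C : A →+* MvPolynomial (Fin 0) A)).mem_nonZeroDivisors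
  | succ n ih =>
    intro p m hm
    set e := MvPolynomial.finSuccEquiv A n
    have hcoeff : ((e p).coeff (m 0)).coeff m.tail = p.coeff m := by
      rw [finSuccEquiv_coeff_coeff, Finsupp.cons_tail]
    have hreg : (e p).coeff (m 0) ∈ nonZeroDivisors (MvPolynomial (Fin n) A) :=
      ih _ m.tail (hcoeff ▸ hm)
    have hP : e p ∈ nonZeroDivisors (Polynomial (MvPolynomial (Fin n) A)) := by
      rw [Polynomial.mem_nonZeroDivisors_iff]
      intro a ha
      have : a * (e p).coeff (m 0) = 0 := by
        have := congrArg (fun q => Polynomial.coeff q (m 0)) ha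
        simpa [Polynomial.coeff_smul, smul_eq_mul] using this
      exact mem_nonZeroDivisors_iff_right.1 hreg _ this
    rw [mem_nonZeroDivisors_iff_right]
    intro q hq
    have : e q * e p = 0 := by rw [← map_mul, hq, map_zero]
    have : e q = 0 := mem_nonZeroDivisors_iff_right.1 hP _ this
    exact e.injective (by simpa using this)

variable [Nontrivial A]

lemma regular_of_isUnit_coeff {σ : Type*} (p : MvPolynomial σ A) (m : σ →₀ ℕ)
    (hm : IsUnit (p.coeff m)) : p ∈ nonZeroDivisors (MvPolynomial σ A) := by
  rw [mem_nonZeroDivisors_iff_right]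
  intro q hq
  obtain ⟨u, q', p', hq', hp'⟩ := exists_finset_rename₂ q p
  have hinj : Function.Injective ((↑) : {x // x ∈ u} → σ) := Subtype.val_injective
  have hne : p.coeff m ≠ 0 := hm.ne_zero
  have hne' : ((rename ((↑) : {x // x ∈ u} → σ)) p').coeff m ≠ 0 := by
    rw [← hp']; exact hne
  obtain ⟨d, hd, _⟩ := coeff_rename_ne_zero _ p' m hne'
  have hval : p'.coeff d = p.coeff m := by
    rw [hp', ← hd, coeff_rename_mapDomain _ hinj]
  set n := Fintype.card {x // x ∈ u}
  set eq := Fintype.equivFin {x // x ∈ u}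
  have hreg := fin_regular_of_isUnit_coeff n (rename eq p') (d.mapDomain eq)
    (by rw [coeff_rename_mapDomain _ eq.injective, hval]; exact hm)
  have hq'p' : q' * p' = 0 := by
    apply rename_injective _ hinj
    rw [map_mul, ← hq', ← hp', hq, map_zero]
  have : rename eq q' * rename eq p' = 0 := by rw [← map_mul, hq'p', map_zero]
  have : rename eq q' = 0 := mem_nonZeroDivisors_iff_right.1 hreg _ this
  have : q' = 0 := rename_injective _ eq.injective (by simpa using this)
  rw [hq', this, map_zero]

end McCoy

lemma gonflement_primeCompl_le_nonZeroDivisors (A : Type) [CommRing A] [IsLocalRing A]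
    (σ : Type) :
    (gonflementIdeal A σ).primeCompl ≤ nonZeroDivisors (MvPolynomial σ A) := by
  intro p hp
  have hpI : p ∉ gonflementIdeal A σ := hp
  rw [gonflementIdeal_eq_ker] at hpI
  have hne : MvPolynomial.map (residue A) p ≠ 0 := fun h => hpI (RingHom.mem_ker.2 h)
  obtain ⟨m, hm⟩ := MvPolynomial.ne_zero_iff.1 hne
  rw [coeff_map] at hm
  exact regular_of_isUnit_coeff p m ((residue_ne_zero_iff_isUnit _).1 hm)


/-- **Property (G)** (filtered-union part). Let `A` be a noetherian henselian local ring with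
infinite residue field, and let `B` be the `∞`-gonflement of `A` (the localization of the
polynomial ring `A[(xᵢ)_{i ∈ ℕ}]` in countably many variables at the prime ideal
`𝔪·A[(xᵢ)_{i ∈ ℕ}]`). Then `B` is the filtered union of smooth split sub-`A`-algebras: every
finite subset of `B` is contained in a sub-`A`-algebra `C ⊆ B` which is smooth over `A`
(formally smooth and of finite presentation) and split over `A` (there is an `A`-algebra
homomorphism `C → A`). -/
theorem infinite_gonflement_filtered_union_of_smooth_split
    (A : Type) [CommRing A] [HenselianLocalRing A] [IsNoetherianRing A]
    [Infinite (IsLocalRing.ResidueField A)]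
    (s : Finset (Gonflement A ℕ)) :
    ∃ C : Subalgebra A (Gonflement A ℕ),
      (↑s : Set (Gonflement A ℕ)) ⊆ (C : Set (Gonflement A ℕ)) ∧
      Algebra.FormallySmooth A C ∧
      Algebra.FinitePresentation A C ∧
      Nonempty (C →ₐ[A] A) := by
  classical
  have halg_inj : Function.Injective (algebraMap (MvPolynomial ℕ A) (Gonflement A ℕ)) :=
    IsLocalization.injective (Gonflement A ℕ) (gonflement_primeCompl_le_nonZeroDivisors A ℕ)
  -- choose numerators and denominators
  choose fg hfg using fun b : Gonflement A ℕ => IsLocalization.surj (gonflementIdeal A ℕ).primeCompl b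
  set f : Gonflement A ℕ → MvPolynomial ℕ A := fun b => (fg b).1 with hf
  set g : Gonflement A ℕ → MvPolynomial ℕ A := fun b => ((fg b).2 : MvPolynomial ℕ A) with hgdef
  have hg : ∀ b, g b ∈ (gonflementIdeal A ℕ).primeCompl := fun b => (fg b).2.2
  -- the finitely many variables needed
  set t : Finset ℕ := s.biUnion (fun b => (f b).vars ∪ (g b).vars) with ht
  set τ := {x // x ∈ (↑t : Set ℕ)} with hτ
  have hmem : ∀ b ∈ s, f b ∈ supported A (↑t : Set ℕ) ∧ g b ∈ supported A (↑t : Set ℕ) := by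
    intro b hb
    constructor <;>
    · rw [mem_supported]
      refine subset_trans (Finset.coe_subset.2 ?_) subset_rfl
      intro x hx
      refine Finset.mem_biUnion.2 ⟨b, hb, ?_⟩
      first
        | exact Finset.mem_union_left _ hx
        | exact Finset.mem_union_right _ hx
  have hpre : ∀ b : Gonflement A ℕ, ∃ fg₀ : MvPolynomial τ A × MvPolynomial τ A,
      b ∈ s → rename (Subtype.val) fg₀.1 = f b ∧ rename (Subtype.val) fg₀.2 = g b := by
    intro b
    by_cases hb : b ∈ s
    · have h1 := (hmem b hb).1
      have h2 := (hmem b hb).2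
      rw [supported_eq_range_rename] at h1 h2
      obtain ⟨f₀, hf₀⟩ := h1
      obtain ⟨g₀, hg₀⟩ := h2
      exact ⟨(f₀, g₀), fun _ => ⟨hf₀, hg₀⟩⟩
    · exact ⟨(0, 0), fun h => absurd h hb⟩
  choose fg₀ hfg₀ using hpre
  set G : MvPolynomial ℕ A := ∏ b ∈ s, g b with hGdef
  set G₀ : MvPolynomial τ A := ∏ b ∈ s, (fg₀ b).2 with hG₀def
  have hG : G ∈ (gonflementIdeal A ℕ).primeCompl := prod_mem (fun b _ => hg b)
  have hrenG : rename (Subtype.val : τ → ℕ) G₀ = G := by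
    rw [hG₀def, map_prod]
    exact Finset.prod_congr rfl (fun b hb => (hfg₀ b hb).2)
  set ψ : MvPolynomial τ A →ₐ[A] Gonflement A ℕ :=
    (IsScalarTower.toAlgHom A (MvPolynomial ℕ A) (Gonflement A ℕ)).comp (rename (Subtype.val : τ → ℕ)) with hψdef
  have hψ : ∀ q : MvPolynomial τ A, ψ q = algebraMap (MvPolynomial ℕ A) (Gonflement A ℕ) (rename (Subtype.val : τ → ℕ) q) :=
    fun _ => rfl
  have hGunit : IsUnit (ψ G₀) := by
    rw [hψ, hrenG]
    exact IsLocalization.map_units (Gonflement A ℕ) (⟨G, hG⟩ : (gonflementIdeal A ℕ).primeCompl)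
  have hpow : ∀ y : Submonoid.powers G₀, IsUnit (ψ y) := by
    rintro ⟨y, k, rfl⟩
    rw [map_pow]
    exact hGunit.pow k
  set φ : Localization.Away G₀ →ₐ[A] Gonflement A ℕ := IsLocalization.liftAlgHom hpow with hφdef
  have hφ_inj : Function.Injective φ := by
    rw [injective_iff_map_eq_zero]
    intro x hx
    obtain ⟨⟨p, m⟩, rfl⟩ := IsLocalization.mk'_surjective (Submonoid.powers G₀) x
    rw [hφdef, IsLocalization.liftAlgHom_apply, IsLocalization.lift_mk'_spec] at hx
    rw [mul_zero] at hx
    have hp0 : rename (Subtype.val : τ → ℕ) p = 0 := by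
      apply halg_inj
      rw [map_zero, ← hψ]
      exact hx
    have : p = 0 := rename_injective _ Subtype.val_injective (by simpa using hp0)
    rw [this]
    exact IsLocalization.mk'_zero _
  -- membership
  have hsub : (↑s : Set (Gonflement A ℕ)) ⊆ (φ.range : Set (Gonflement A ℕ)) := by
    intro b hb
    have hbs : b ∈ s := hb
    rw [SetLike.mem_coe]
    refine ⟨IsLocalization.mk' (Localization.Away G₀)
      ((fg₀ b).1 * ∏ c ∈ s.erase b, (fg₀ c).2) ⟨G₀, Submonoid.mem_powers G₀⟩, ?_⟩
    show φ _ = b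
    rw [hφdef, IsLocalization.liftAlgHom_apply, IsLocalization.lift_mk'_spec]
    show ψ ((fg₀ b).1 * ∏ c ∈ s.erase b, (fg₀ c).2) = ψ G₀ * b
    rw [hψ, hψ, hrenG]
    have hnum : rename (Subtype.val : τ → ℕ) ((fg₀ b).1 * ∏ c ∈ s.erase b, (fg₀ c).2) =
        f b * ∏ c ∈ s.erase b, g c := by
      rw [map_mul, (hfg₀ b hbs).1, map_prod]
      exact congrArg _ (Finset.prod_congr rfl
        (fun c hc => (hfg₀ c (Finset.mem_of_mem_erase hc)).2))
    rw [hnum]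
    have hGsplit : G = g b * ∏ c ∈ s.erase b, g c := (Finset.mul_prod_erase s g hbs).symm
    have hb' : b * algebraMap (MvPolynomial ℕ A) (Gonflement A ℕ) (g b) = algebraMap (MvPolynomial ℕ A) (Gonflement A ℕ) (f b) := hfg b
    rw [hGsplit, map_mul, map_mul, mul_comm (algebraMap (MvPolynomial ℕ A) (Gonflement A ℕ) (g b)) _, mul_assoc, mul_comm _ b,
      hb']
    ring
  -- smoothness
  haveI h1 : Algebra.Smooth A (MvPolynomial τ A) := ⟨inferInstance, inferInstance⟩
  haveI h2 : Algebra.Smooth (MvPolynomial τ A) (Localization.Away G₀) :=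
    Algebra.Smooth.of_isLocalization_Away G₀
  haveI h3 : Algebra.Smooth A (Localization.Away G₀) :=
    Algebra.Smooth.comp A (MvPolynomial τ A) (Localization.Away G₀)
  let e : Localization.Away G₀ ≃ₐ[A] φ.range := AlgEquiv.ofInjective φ hφ_inj
  haveI h4f : Algebra.FormallySmooth A φ.range := Algebra.FormallySmooth.of_equiv e
  haveI h4p : Algebra.FinitePresentation A φ.range := by
    have h := Algebra.FinitePresentation.equiv (R := A) (B := ↥φ.range) e
    exact h
  -- splitting
  have hGk : MvPolynomial.map (residue A) G ≠ 0 := by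
    intro h
    have : G ∉ gonflementIdeal A ℕ := hG
    rw [gonflementIdeal_eq_ker] at this
    exact this (RingHom.mem_ker.2 h)
  have hex : ∃ v : ℕ → ResidueField A, eval v (MvPolynomial.map (residue A) G) ≠ 0 := by
    by_contra hcon
    push_neg at hcon
    exact hGk (MvPolynomial.funext fun x => by simpa using hcon x)
  obtain ⟨v, hv⟩ := hex
  choose a ha using fun i : τ => residue_surjective (R := A) (v (i : ℕ))
  have haunit : IsUnit ((aeval a) G₀) := by
    rw [← residue_ne_zero_iff_isUnit]
    have h5 : residue A ((aeval a) G₀) = eval v (MvPolynomial.map (residue A) G) := by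
      rw [← hrenG, map_rename, eval_rename, aeval_def,
        eval₂_comp_left (residue A) (algebraMap A A) a G₀]
      have h6 : (residue A).comp (algebraMap A A) = residue A := RingHom.ext fun x => by simp
      rw [h6, eval₂_eq_eval_map]
      have h7 : ⇑(residue A) ∘ a = v ∘ Subtype.val := funext fun i => ha i
      rw [h7]
    rw [h5]
    exact hv
  have hevpow : ∀ y : Submonoid.powers G₀, IsUnit ((aeval a : MvPolynomial τ A →ₐ[A] A) y) := by
    rintro ⟨y, k, rfl⟩
    rw [map_pow]
    exact haunit.pow k
  let ρ : Localization.Away G₀ →ₐ[A] A := IsLocalization.liftAlgHom hevpow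
  exact ⟨φ.range, hsub, h4f, h4p,
    ⟨ρ.comp (e.symm : φ.range ≃ₐ[A] Localization.Away G₀).toAlgHom⟩⟩
end
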